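/- Let h, m, q, d, r be natural numbers with q ≤ m ≤ h and 2r < d. Let C be an F₂-linear subspace of F₂^h such that every nonzero c ∈ C has Hamming weight at least d, and such that the projection of C onto the first m coordinates is all of F₂^m. Then for every x ∈ F₂^q, the number of vectors s ∈ F₂^{h−q} for which there exists z ∈ F₂^{h−q} with Hamming distance at most r from s and with the concatenation x∘z in C is at least 2^{m−q}·C(h−q, r), where C(h−q, r) is a binomial coefficient. -/

import Mathlib

/-- Concatenation of a prefix `x ∈ F^q` with a suffix `z ∈ F^{h-q}`, as a vector in `F^h`. -/
def concatVec {F : Type*} (q h : ℕ) (hqh : q ≤ h) (x : Fin q → F) (z : Fin (h - q) → F) :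
    Fin h → F :=
  fun i => if hi : (i : ℕ) < q then x ⟨i, hi⟩
    else z ⟨(i : ℕ) - q, by have := i.isLt; omega⟩

theorem stmt9 (h m q d r : ℕ) (hqm : q ≤ m) (hmh : m ≤ h) (hrd : 2 * r < d)
    (C : Submodule (ZMod 2) (Fin h → ZMod 2))
    (hdist : ∀ c ∈ C, c ≠ 0 → d ≤ hammingNorm c)
    (hsys : ∀ w : Fin m → ZMod 2, ∃ c ∈ C, ∀ i : Fin m, c (Fin.castLE hmh i) = w i) :
    ∀ x : Fin q → ZMod 2,
      2 ^ (m - q) * (h - q).choose r ≤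
        Set.ncard {s : Fin (h - q) → ZMod 2 |
          ∃ z : Fin (h - q) → ZMod 2, hammingDist z s ≤ r ∧
            concatVec q h (hqm.trans hmh) x z ∈ C} := by
  intro x
  classical
  have hqh : q ≤ h := hqm.trans hmh
  -- the word on first m coords we want
  set W : (Fin (m - q) → ZMod 2) → Fin m → ZMod 2 := fun w i =>
    if hi : (i : ℕ) < q then x ⟨i, hi⟩ else w ⟨(i : ℕ) - q, by have := i.isLt; omega⟩ with hW
  choose c hcC hcW using fun w => hsys (W w)
  -- suffix of the codeword
  set Z : (Fin (m - q) → ZMod 2) → Fin (h - q) → ZMod 2 := fun w j =>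
    c w ⟨q + (j : ℕ), by have := j.isLt; omega⟩ with hZ
  have hconcat : ∀ w, concatVec q h hqh x (Z w) = c w := by
    intro w
    funext i
    simp only [concatVec]
    split
    · next hi =>
      have := hcW w ⟨(i : ℕ), lt_of_lt_of_le hi hqm⟩
      simp only [hW, hi, dif_pos] at this
      rw [← this]
      congr 1
    · next hi =>
      simp only [hZ]
      congr 1
      ext
      simp
      omega
  have hrecover : ∀ w (t : Fin (m - q)), Z w ⟨(t : ℕ), by have := t.isLt; omega⟩ = w t := by
    intro w t
    have ht := hcW w ⟨q + (t : ℕ), by have := t.isLt; omega⟩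
    simp only [hW] at ht
    rw [dif_neg (by omega)] at ht
    rw [show (⟨q + (t : ℕ) - q, by have := t.isLt; omega⟩ : Fin (m - q)) = t from
      Fin.ext (by simp)] at ht
    exact ht
  -- error patterns
  set E : Finset (Fin (h - q)) → Fin (h - q) → ZMod 2 := fun A i => if i ∈ A then 1 else 0 with hE
  have hEnorm : ∀ A, hammingNorm (E A) = A.card := by
    intro A
    unfold hammingNorm
    congr 1
    ext i
    simp only [Finset.mem_filter, Finset.mem_univ, true_and, hE]
    by_cases hi : i ∈ A <;> simp [hi]
  have hEinj : Function.Injective E := by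
    intro A B hAB
    ext i
    have := congrFun hAB i
    simp only [hE] at this
    by_cases hA : i ∈ A <;> by_cases hB : i ∈ B <;> simp_all
  -- the injection
  set F : (Fin (m - q) → ZMod 2) × {A : Finset (Fin (h - q)) // A.card = r} →
      Fin (h - q) → ZMod 2 := fun p => Z p.1 + E p.2.1 with hF
  set S := {s : Fin (h - q) → ZMod 2 |
          ∃ z : Fin (h - q) → ZMod 2, hammingDist z s ≤ r ∧
            concatVec q h hqh x z ∈ C} with hS
  have hrange : Set.range F ⊆ S := by
    rintro _ ⟨⟨w, A, hA⟩, rfl⟩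
    refine ⟨Z w, ?_, by rw [hconcat]; exact hcC w⟩
    rw [hammingDist_eq_hammingNorm]
    simp only [hF]
    rw [show -Z w + (Z w + E A) = -(E A) by rw [neg_add_cancel_left]; exact funext fun i => (CharTwo.neg_eq _).symm]
    rw [show -(E A) = E A from funext fun i => CharTwo.neg_eq _]
    rw [hEnorm, hA]
  have hsubdiff : ∀ w₁ w₂, concatVec q h hqh x (Z w₁) - concatVec q h hqh x (Z w₂)
      = concatVec q h hqh 0 (Z w₁ - Z w₂) := by
    intro w₁ w₂
    funext i
    simp only [concatVec, Pi.sub_apply]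
    split <;> simp
  have hnorm0 : ∀ u : Fin (h - q) → ZMod 2, hammingNorm (concatVec q h hqh (0 : Fin q → ZMod 2) u) = hammingNorm u := by
    intro u
    unfold hammingNorm
    refine (Finset.card_bij
      (fun (j : Fin (h - q)) (_ : j ∈ Finset.univ.filter fun j => u j ≠ 0) =>
        (⟨q + (j : ℕ), by have := j.isLt; omega⟩ : Fin h)) ?_ ?_ ?_).symm
    · intro j hj
      simp only [Finset.mem_filter, Finset.mem_univ, true_and] at hj ⊢
      simp only [concatVec]
      rw [dif_neg (by omega)]
      convert hj using 3
      omega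
    · intro j₁ h₁ j₂ h₂ hj
      have : q + (j₁ : ℕ) = q + (j₂ : ℕ) := congrArg Fin.val hj
      exact Fin.ext (by omega)
    · intro b hb
      simp only [Finset.mem_filter, Finset.mem_univ, true_and] at hb
      simp only [concatVec] at hb
      have hge : ¬ ((b : ℕ) < q) := by
        intro hlt
        rw [dif_pos hlt] at hb
        simp at hb
      rw [dif_neg hge] at hb
      refine ⟨⟨(b : ℕ) - q, by have := b.isLt; omega⟩, ?_, ?_⟩
      · simpa using hb
      · apply Fin.ext
        simp
        omega
  have hFinj : Function.Injective F := by
    rintro ⟨w₁, A₁, hA₁⟩ ⟨w₂, A₂, hA₂⟩ heq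
    simp only [hF] at heq
    have hzz : Z w₁ - Z w₂ = E A₂ - E A₁ := by
      have := heq
      funext i
      have hpt := congrFun heq i
      simp only [Pi.add_apply] at hpt
      simp only [Pi.sub_apply]
      linear_combination hpt
    have hbound : hammingNorm (Z w₁ - Z w₂) ≤ 2 * r := by
      rw [hzz, sub_eq_neg_add, ← hammingDist_eq_hammingNorm, hammingDist_comm]
      calc hammingDist (E A₂) (E A₁) ≤ hammingDist (E A₂) 0 + hammingDist 0 (E A₁) :=
            hammingDist_triangle _ _ _
        _ = hammingNorm (E A₂) + hammingNorm (E A₁) := by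
            rw [hammingDist_zero_right, hammingDist_comm, hammingDist_zero_right]
        _ = 2 * r := by rw [hEnorm, hEnorm, hA₁, hA₂]; ring
    have hmem : c w₁ - c w₂ ∈ C := sub_mem (hcC w₁) (hcC w₂)
    have hceq : c w₁ = c w₂ := by
      by_contra hne
      have hne' : c w₁ - c w₂ ≠ 0 := sub_ne_zero_of_ne hne
      have := hdist _ hmem hne'
      rw [← hconcat w₁, ← hconcat w₂, hsubdiff, hnorm0] at this
      omega
    have hZeq : Z w₁ = Z w₂ := by
      have := hceq
      rw [← hconcat w₁, ← hconcat w₂] at this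
      funext j
      have : concatVec q h hqh x (Z w₁) ⟨q + (j:ℕ), by have := j.isLt; omega⟩
           = concatVec q h hqh x (Z w₂) ⟨q + (j:ℕ), by have := j.isLt; omega⟩ := by rw [this]
      simp only [concatVec] at this
      rw [dif_neg (by omega), dif_neg (by omega)] at this
      convert this using 2 <;> (ext; simp)
    have hweq : w₁ = w₂ := by
      funext t
      rw [← hrecover w₁ t, ← hrecover w₂ t, hZeq]
    have hEeq : E A₁ = E A₂ := by
      have := heq
      rw [hZeq] at this
      exact add_left_cancel this
    have : A₁ = A₂ := hEinj hEeq
    simp [hweq, this]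
  -- counting
  have h1 : (Set.range F).ncard = 2 ^ (m - q) * (h - q).choose r := by
    rw [← Set.image_univ, Set.ncard_image_of_injective _ hFinj, Set.ncard_univ,
      Nat.card_eq_fintype_card, Fintype.card_prod, Fintype.card_finset_len]
    simp [Fintype.card_fun]
  calc 2 ^ (m - q) * (h - q).choose r = (Set.range F).ncard := h1.symm
    _ ≤ S.ncard := Set.ncard_le_ncard hrange (Set.toFinite S)
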